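/- arXiv:2105.12721 — 5 statements merged into one kernel-verified Lean document; each statement's English description precedes it below -/
import Mathlib

section
/- There is no three-qubit pure state whose symmetry group (the set of qubit permutations leaving the state invariant) is exactly the alternating group A_3; any state invariant under all cyclic permutations of three qubits is invariant under the full symmetric group S_3. -/
/-- The space of pure (unnormalized) states of `N` qubits, written in the
computational basis: a complex amplitude for each bit string. -/
abbrev QState (N : ℕ) := (Fin N → Fin 2) → ℂ

/-- The action of a permutation of the subsystems on an `N`-qubit state
(permutation of the tensor factors). -/
def permAct {N : ℕ} (σ : Equiv.Perm (Fin N)) (ψ : QState N) : QState N :=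
  fun x => ψ (x ∘ σ)

/-!
With more than two qubits, every bit string `x` has two positions `i ≠ j` carrying the same
bit, so `x` is fixed by the transposition `(i j)`. For odd `σ` the permutation `(i j) * σ` is
even, and `ψ (x ∘ σ) = ψ ((x ∘ (i j)) ∘ σ) = ψ x` by `A_N`-invariance.
-/

theorem Function.comp_swap_eq_self {α β : Type*} [DecidableEq α] {f : α → β} {i j : α}
    (h : f i = f j) : f ∘ Equiv.swap i j = f := by
  simp [Equiv.comp_swap_eq_update, h]

theorem permAct_eq_self_of_forall_mem_alternatingGroup {N : ℕ} (hN : 2 < N) {ψ : QState N}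
    (h : ∀ σ ∈ alternatingGroup (Fin N), permAct σ ψ = ψ) (σ : Equiv.Perm (Fin N)) :
    permAct σ ψ = ψ := by
  by_cases hσ : σ ∈ alternatingGroup (Fin N)
  · exact h σ hσ
  funext x
  obtain ⟨i, j, hij, hx⟩ := Fintype.exists_ne_map_eq_of_card_lt x (by simpa using hN)
  have h_even : Equiv.swap i j * σ ∈ alternatingGroup (Fin N) := by
    rw [Equiv.Perm.mem_alternatingGroup] at hσ ⊢
    rw [Equiv.Perm.sign_mul, Equiv.Perm.sign_swap hij, Int.units_ne_iff_eq_neg.mp hσ,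
      neg_mul_neg, one_mul]
  calc permAct σ ψ x = ψ ((x ∘ Equiv.swap i j) ∘ σ) := by rw [Function.comp_swap_eq_self hx]; rfl
    _ = ψ x := congrFun (h _ h_even) x

/-- There is no three-qubit state whose symmetry group is exactly the
alternating group `A₃`: any state invariant under all cyclic (even)
permutations of three qubits is invariant under the full symmetric group. -/
theorem stmt0 :
    (¬ ∃ ψ : QState 3,
        {σ : Equiv.Perm (Fin 3) | permAct σ ψ = ψ}
          = (alternatingGroup (Fin 3) : Set (Equiv.Perm (Fin 3)))) ∧
    (∀ ψ : QState 3,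
        (∀ σ ∈ alternatingGroup (Fin 3), permAct σ ψ = ψ) →
        ∀ σ : Equiv.Perm (Fin 3), permAct σ ψ = ψ) := by
  have h_symm : ∀ ψ : QState 3, (∀ σ ∈ alternatingGroup (Fin 3), permAct σ ψ = ψ) →
      ∀ σ : Equiv.Perm (Fin 3), permAct σ ψ = ψ := fun _ =>
    permAct_eq_self_of_forall_mem_alternatingGroup (by norm_num)
  refine ⟨?_, h_symm⟩
  rintro ⟨ψ, hψ⟩
  have h_swap : Equiv.swap (0 : Fin 3) 1 ∈ alternatingGroup (Fin 3) := by
    rw [← SetLike.mem_coe, ← hψ]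
    exact h_symm ψ (fun σ hσ => (Set.ext_iff.mp hψ σ).mpr hσ) _
  rw [Equiv.Perm.mem_alternatingGroup, Equiv.Perm.sign_swap (by decide)] at h_swap
  exact absurd h_swap (by decide)
end

section
/- There is no four-qubit pure state whose symmetry group is exactly the cyclic group C_4: any pure state in (C^2)^{⊗4} invariant under the cyclic permutation (1 2 3 4) is also invariant under the dihedral group D_8. -/
/-- The cyclic group `C₄ ≤ S₄`, generated by the 4-cycle `(0 1 2 3)`. -/
def C4 : Subgroup (Equiv.Perm (Fin 4)) := Subgroup.closure {finRotate 4}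

/-- The dihedral group `D₈ ≤ S₄` of symmetries of the square with vertices
`0,1,2,3` in cyclic order: generated by the rotation `(0 1 2 3)` and the
reflection `(1 3)` across a diagonal. -/
def D8 : Subgroup (Equiv.Perm (Fin 4)) :=
  Subgroup.closure {finRotate 4, Equiv.swap (1 : Fin 4) 3}

/-!
The permutations fixing a state `ψ` form a subgroup of `S₄`, so it contains `D₈` as soon as it
contains the rotation `ρ` and the reflection `(1 3)`. The reflection comes for free with `ρ`:
binary necklaces of length four are achiral, i.e. reflecting a bit string `x` gives a rotation of
`x`, so `ψ (x ∘ (1 3)) = ψ (x ∘ ρᵏ) = ψ x`. Since `(1 3)` does not commute with `ρ`, it lies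
outside `C₄`, so no stabilizer is exactly `C₄`.
-/

section PermAct

variable {N : ℕ}

lemma permAct_one (ψ : QState N) : permAct 1 ψ = ψ := rfl

lemma permAct_mul (σ τ : Equiv.Perm (Fin N)) (ψ : QState N) :
    permAct (σ * τ) ψ = permAct σ (permAct τ ψ) := rfl

def QState.stabilizer (ψ : QState N) : Subgroup (Equiv.Perm (Fin N)) where
  carrier := {σ | permAct σ ψ = ψ}
  one_mem' := permAct_one ψ
  mul_mem' {σ τ} (hσ : permAct σ ψ = ψ) (hτ : permAct τ ψ = ψ) := by
    show permAct (σ * τ) ψ = ψ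
    rw [permAct_mul, hτ, hσ]
  inv_mem' {σ} (hσ : permAct σ ψ = ψ) := by
    show permAct σ⁻¹ ψ = ψ
    conv_lhs => rw [← hσ, ← permAct_mul, inv_mul_cancel, permAct_one]

end PermAct

lemma C4_le_stabilizer_iff {ψ : QState 4} :
    C4 ≤ ψ.stabilizer ↔ permAct (finRotate 4) ψ = ψ :=
  (Subgroup.closure_le _).trans Set.singleton_subset_iff

lemma exists_comp_swap_eq_comp_finRotate_pow : ∀ x : Fin 4 → Fin 2, ∃ k : Fin 4,
    x ∘ Equiv.swap (1 : Fin 4) 3 =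
      x ∘ ((finRotate 4 ^ (k : ℕ) : Equiv.Perm (Fin 4)) : Fin 4 → Fin 4) := by
  decide

lemma exists_mem_C4_comp_swap_eq (x : Fin 4 → Fin 2) :
    ∃ σ ∈ C4, x ∘ Equiv.swap 1 3 = x ∘ σ := by
  obtain ⟨k, hk⟩ := exists_comp_swap_eq_comp_finRotate_pow x
  exact ⟨finRotate 4 ^ (k : ℕ), pow_mem (Subgroup.subset_closure (Set.mem_singleton _)) _, hk⟩

lemma swap_mem_stabilizer_of_C4_le {ψ : QState 4} (h : C4 ≤ ψ.stabilizer) :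
    Equiv.swap 1 3 ∈ ψ.stabilizer := by
  funext x
  obtain ⟨σ, hσ, hx⟩ := exists_mem_C4_comp_swap_eq x
  calc permAct (Equiv.swap 1 3) ψ x = ψ (x ∘ σ) := congrArg ψ hx
    _ = ψ x := congrFun (h hσ) x

lemma D8_le_stabilizer_of_C4_le {ψ : QState 4} (h : C4 ≤ ψ.stabilizer) :
    D8 ≤ ψ.stabilizer :=
  (Subgroup.closure_le _).mpr <| Set.insert_subset_iff.mpr
    ⟨h (Subgroup.subset_closure rfl),
      Set.singleton_subset_iff.mpr (swap_mem_stabilizer_of_C4_le h)⟩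

lemma C4_le_centralizer : C4 ≤ Subgroup.centralizer {finRotate 4} :=
  (Subgroup.closure_le _).mpr <| Set.singleton_subset_iff.mpr <|
    Subgroup.mem_centralizer_singleton_iff.mpr rfl

lemma swap_notMem_C4 : Equiv.swap 1 3 ∉ C4 := fun hswap =>
  absurd (Subgroup.mem_centralizer_singleton_iff.mp (C4_le_centralizer hswap)) (by decide)

/-- There is no four-qubit state whose symmetry group is exactly the cyclic
group `C₄`: any state of four qubits invariant under the cyclic permutation
`(0 1 2 3)` is invariant under the whole dihedral group `D₈`. -/
theorem stmt4 :
    (¬ ∃ ψ : QState 4,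
        {σ : Equiv.Perm (Fin 4) | permAct σ ψ = ψ} = (C4 : Set (Equiv.Perm (Fin 4)))) ∧
    (∀ ψ : QState 4, permAct (finRotate 4) ψ = ψ → ∀ σ ∈ D8, permAct σ ψ = ψ) := by
  refine ⟨?_, fun ψ hψ σ hσ => D8_le_stabilizer_of_C4_le (C4_le_stabilizer_iff.mpr hψ) hσ⟩
  rintro ⟨ψ, hψ⟩
  have hstab : ψ.stabilizer = C4 := SetLike.coe_injective hψ
  exact swap_notMem_C4 (hstab ▸ swap_mem_stabilizer_of_C4_le hstab.ge)
end

section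
/- For an excitation-state |G⟩ associated to a hypergraph G, the group of permutations of the qubits that leave |G⟩ invariant is exactly the automorphism group of the hypergraph G. -/
open scoped BigOperators

/-- The bit string with `1`s exactly at the positions of `e`. -/
def indicatorBits {N : ℕ} (e : Finset (Fin N)) : Fin N → Fin 2 :=
  fun i => if i ∈ e then 1 else 0

/-- The excitation-state `|G⟩ = (1/√|E|) Σ_{e ∈ E} |ψ_e⟩` of a hypergraph with
edge set `E`, where `|ψ_e⟩` has `|1⟩` at positions in `e` and `|0⟩` elsewhere. -/
noncomputable def excState {N : ℕ} (E : Finset (Finset (Fin N))) : QState N :=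
  fun x => ((Real.sqrt E.card : ℂ))⁻¹ * ∑ e ∈ E, if x = indicatorBits e then 1 else 0

/-!
A qubit permutation `σ` sends `|G⟩` to the excitation-state of the image hypergraph `σ(G)`,
and a hypergraph is recovered from its excitation-state as the set of `e` with nonzero
amplitude on `|ψ_e⟩`. Hence `σ` fixes `|G⟩` exactly when `σ(G) = G`.
-/

lemma indicatorBits_injective {N : ℕ} : Function.Injective (indicatorBits (N := N)) := by
  intro e e' h
  ext i
  have hi := congrFun h i
  simp only [indicatorBits] at hi
  split_ifs at hi <;> simp_all

lemma indicatorBits_image_comp {N : ℕ} (σ : Equiv.Perm (Fin N)) (e : Finset (Fin N)) :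
    indicatorBits (e.image σ) ∘ σ = indicatorBits e := by
  funext i
  simp [indicatorBits]

lemma excState_indicatorBits {N : ℕ} (E : Finset (Finset (Fin N))) (a : Finset (Fin N)) :
    excState E (indicatorBits a) = if a ∈ E then ((Real.sqrt E.card : ℂ))⁻¹ else 0 := by
  simp [excState, indicatorBits_injective.eq_iff]

lemma excState_indicatorBits_ne_zero_iff {N : ℕ} (E : Finset (Finset (Fin N)))
    (a : Finset (Fin N)) : excState E (indicatorBits a) ≠ 0 ↔ a ∈ E := by
  rw [excState_indicatorBits]
  split_ifs with ha
  · have hcard : (0 : ℝ) < E.card := by exact_mod_cast Finset.card_pos.mpr ⟨a, ha⟩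
    simpa [ha] using (Real.sqrt_pos.mpr hcard).ne'
  · simpa using ha

lemma excState_injective {N : ℕ} : Function.Injective (excState (N := N)) := by
  intro E F h
  ext a
  rw [← excState_indicatorBits_ne_zero_iff, ← excState_indicatorBits_ne_zero_iff, h]

lemma permAct_excState {N : ℕ} (σ : Equiv.Perm (Fin N)) (E : Finset (Finset (Fin N))) :
    permAct σ (excState E) = excState (E.image fun e => e.image σ) := by
  have himage : Function.Injective fun e : Finset (Fin N) => e.image σ :=
    Finset.image_injective σ.injective
  funext x
  simp only [permAct, excState, Finset.card_image_of_injective E himage,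
    Finset.sum_image fun e _ e' _ h => himage h]
  congr 1
  refine Finset.sum_congr rfl fun e _ => ?_
  simp only [← indicatorBits_image_comp σ e, σ.surjective.injective_comp_right.eq_iff]

lemma Finset.image_eq_self_iff_of_injective {α : Type*} [DecidableEq α] {f : α → α}
    (hf : Function.Injective f) (s : Finset α) : s.image f = s ↔ ∀ a, a ∈ s ↔ f a ∈ s := by
  constructor
  · intro h a
    conv_rhs => rw [← h]
    rw [hf.mem_finset_image]
  · intro h
    refine Finset.eq_of_subset_of_card_le (Finset.image_subset_iff.mpr fun a ha => (h a).mp ha) ?_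
    rw [Finset.card_image_of_injective s hf]

theorem stmt5_general {N : ℕ} (E : Finset (Finset (Fin N)))
    (σ : Equiv.Perm (Fin N)) :
    permAct σ (excState E) = excState E ↔
      ∀ e : Finset (Fin N), e ∈ E ↔ e.image σ ∈ E := by
  rw [permAct_excState, excState_injective.eq_iff,
    Finset.image_eq_self_iff_of_injective (Finset.image_injective σ.injective)]

/-- The group of qubit permutations leaving the excitation-state `|G⟩` of a
hypergraph invariant is exactly the automorphism group of the hypergraph. -/
theorem stmt5 {N : ℕ} (E : Finset (Finset (Fin N))) (hE : E.Nonempty)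
    (σ : Equiv.Perm (Fin N)) :
    permAct σ (excState E) = excState E ↔
      ∀ e : Finset (Fin N), e ∈ E ↔ e.image σ ∈ E :=
  stmt5_general E σ
end

section
/- The excitation-state |G⟩ of a k-uniform hypergraph G on vertex set V = V_1 ∪ V_2 factorizes as |G⟩ = |G_1⟩_{V_1} ⊗ |G_2⟩_{V_2} if and only if G is a product hypergraph with respect to the partition V_1 | V_2, i.e., there exist edge sets E_1 ⊆ P(V_1), E_2 ⊆ P(V_2) with E = {e_1 ∪ e_2 : e_1 ∈ E_1, e_2 ∈ E_2}. -/
open scoped BigOperators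

/-- `|G⟩` factorizes across the bipartition `S | Sᶜ` of the qubits, i.e. it is
a tensor product of a state on the qubits in `S` and a state on the qubits
outside `S` (expressed by amplitudes that depend only on the respective
coordinates). -/
def FactorizesAcross {N : ℕ} (ψ : QState N) (S : Finset (Fin N)) : Prop :=
  ∃ φ₁ φ₂ : QState N,
    (∀ x y : Fin N → Fin 2, (∀ i ∈ S, x i = y i) → φ₁ x = φ₁ y) ∧
    (∀ x y : Fin N → Fin 2, (∀ i ∉ S, x i = y i) → φ₂ x = φ₂ y) ∧
    (∀ x, ψ x = φ₁ x * φ₂ x)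

/-!
The support of `|G⟩` is exactly the set of edges of `G`, and the support of a product state
`φ₁ ⊗ φ₂` is closed under exchanging the `Sᶜ`-part of one basis string for that of another.
So `|G⟩` factorizes iff `E` is closed under `(e, f) ↦ (e ∩ S) ∪ (f \ S)`, and such an `E` is
exactly the product of its traces `E ∩ S` and `E \ S`; conversely, for a product `E` the
indicator of `E` is the product of the indicators of those traces.
-/

open Finset

section ProductSetSystem

variable {α : Type*} [DecidableEq α] {E : Finset (Finset α)} {S : Finset α}

theorem union_inter_eq_of_subset_of_disjoint {a b : Finset α} (ha : a ⊆ S) (hb : Disjoint b S) :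
    (a ∪ b) ∩ S = a := by
  grind [disjoint_left]

theorem union_sdiff_eq_of_subset_of_disjoint {a b : Finset α} (ha : a ⊆ S) (hb : Disjoint b S) :
    (a ∪ b) \ S = b := by
  grind [disjoint_left]

theorem mem_iff_of_mixing_closed (hmix : ∀ e ∈ E, ∀ f ∈ E, e ∩ S ∪ f \ S ∈ E)
    (g : Finset α) : g ∈ E ↔ g ∩ S ∈ E.image (· ∩ S) ∧ g \ S ∈ E.image (· \ S) := by
  refine ⟨fun hg => ⟨mem_image_of_mem _ hg, mem_image_of_mem _ hg⟩, ?_⟩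
  rintro ⟨hgS, hgSc⟩
  obtain ⟨e, he, hee⟩ := mem_image.mp hgS
  obtain ⟨f, hf, hff⟩ := mem_image.mp hgSc
  have hg : e ∩ S ∪ f \ S = g := by
    rw [hee, hff]
    exact sup_inf_sdiff g S
  exact hg ▸ hmix e he f hf

theorem exists_product_iff_mixing_closed :
    (∃ E₁ E₂ : Finset (Finset α), (∀ e ∈ E₁, e ⊆ S) ∧ (∀ e ∈ E₂, ∀ i ∈ e, i ∉ S) ∧
        E = (E₁ ×ˢ E₂).image (fun p => p.1 ∪ p.2)) ↔
      ∀ e ∈ E, ∀ f ∈ E, e ∩ S ∪ f \ S ∈ E := by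
  constructor
  · rintro ⟨E₁, E₂, hE₁, hE₂, rfl⟩ _ he _ hf
    simp only [mem_image, mem_product, Prod.exists] at he hf ⊢
    obtain ⟨a, b, ⟨ha, hb⟩, rfl⟩ := he
    obtain ⟨a', b', ⟨ha', hb'⟩, rfl⟩ := hf
    refine ⟨a, b', ⟨ha, hb'⟩, ?_⟩
    rw [union_inter_eq_of_subset_of_disjoint (hE₁ a ha) (disjoint_left.mpr (hE₂ b hb)),
      union_sdiff_eq_of_subset_of_disjoint (hE₁ a' ha') (disjoint_left.mpr (hE₂ b' hb'))]
  · intro hmix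
    refine ⟨E.image (· ∩ S), E.image (· \ S), ?_, ?_, ?_⟩
    · simp only [mem_image, forall_exists_index, and_imp]
      rintro _ e - rfl
      exact inter_subset_right
    · simp only [mem_image, forall_exists_index, and_imp]
      rintro _ e - rfl i hi
      exact (mem_sdiff.mp hi).2
    · ext g
      simp only [mem_image, mem_product, Prod.exists]
      constructor
      · intro hg
        exact ⟨g ∩ S, g \ S, ⟨⟨g, hg, rfl⟩, ⟨g, hg, rfl⟩⟩, sup_inf_sdiff g S⟩
      · rintro ⟨_, _, ⟨⟨e, he, rfl⟩, ⟨f, hf, rfl⟩⟩, rfl⟩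
        exact hmix e he f hf

end ProductSetSystem

section Qubits

variable {N : ℕ}

def bitSupport (x : Fin N → Fin 2) : Finset (Fin N) :=
  univ.filter (x · = 1)

@[simp]
theorem mem_bitSupport {x : Fin N → Fin 2} {i : Fin N} : i ∈ bitSupport x ↔ x i = 1 := by
  simp [bitSupport]

theorem eq_indicatorBits_iff (x : Fin N → Fin 2) (e : Finset (Fin N)) :
    x = indicatorBits e ↔ bitSupport x = e := by
  constructor
  · rintro rfl
    ext i
    by_cases h : i ∈ e <;> simp [indicatorBits, h]
  · rintro rfl
    funext i
    rcases Fin.exists_fin_two.mp ⟨x i, rfl⟩ with h | h <;> simp [indicatorBits, h]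

@[simp]
theorem bitSupport_indicatorBits (e : Finset (Fin N)) : bitSupport (indicatorBits e) = e :=
  (eq_indicatorBits_iff _ _).mp rfl

theorem bitSupport_piecewise (S : Finset (Fin N)) (x y : Fin N → Fin 2) :
    bitSupport (S.piecewise x y) = bitSupport x ∩ S ∪ bitSupport y \ S := by
  ext i
  by_cases h : i ∈ S <;> simp [h]

theorem bitSupport_inter_eq_of_eqOn {S : Finset (Fin N)} {x y : Fin N → Fin 2}
    (h : ∀ i ∈ S, x i = y i) : bitSupport x ∩ S = bitSupport y ∩ S := by
  ext i
  simp only [mem_inter, mem_bitSupport]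
  exact and_congr_left fun hi => by rw [h i hi]

theorem bitSupport_sdiff_eq_of_eqOn {S : Finset (Fin N)} {x y : Fin N → Fin 2}
    (h : ∀ i ∉ S, x i = y i) : bitSupport x \ S = bitSupport y \ S := by
  ext i
  simp only [mem_sdiff, mem_bitSupport]
  exact and_congr_left fun hi => by rw [h i hi]

theorem excState_apply (E : Finset (Finset (Fin N))) (x : Fin N → Fin 2) :
    excState E x = (Real.sqrt E.card : ℂ)⁻¹ * if bitSupport x ∈ E then 1 else 0 := by
  simp only [excState, eq_indicatorBits_iff, sum_ite_eq]

theorem excState_ne_zero_iff {E : Finset (Finset (Fin N))} {x : Fin N → Fin 2} :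
    excState E x ≠ 0 ↔ bitSupport x ∈ E := by
  rw [excState_apply]
  split_ifs with hx
  · have : (0 : ℝ) < Real.sqrt E.card := Real.sqrt_pos.mpr (by exact_mod_cast card_pos.mpr ⟨_, hx⟩)
    simpa [hx] using this.ne'
  · simpa using hx

theorem FactorizesAcross.mul_piecewise {ψ : QState N} {S : Finset (Fin N)}
    (h : FactorizesAcross ψ S) (x y : Fin N → Fin 2) :
    ψ (S.piecewise x y) * ψ (S.piecewise y x) = ψ x * ψ y := by
  obtain ⟨φ₁, φ₂, h₁, h₂, hψ⟩ := h
  simp only [hψ]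
  rw [h₁ (S.piecewise x y) x fun i hi => piecewise_eq_of_mem _ _ _ hi,
    h₂ (S.piecewise x y) y fun i hi => piecewise_eq_of_notMem _ _ _ hi,
    h₁ (S.piecewise y x) y fun i hi => piecewise_eq_of_mem _ _ _ hi,
    h₂ (S.piecewise y x) x fun i hi => piecewise_eq_of_notMem _ _ _ hi]
  ring

theorem FactorizesAcross.piecewise_ne_zero {ψ : QState N} {S : Finset (Fin N)}
    (h : FactorizesAcross ψ S) {x y : Fin N → Fin 2} (hx : ψ x ≠ 0) (hy : ψ y ≠ 0) :
    ψ (S.piecewise x y) ≠ 0 :=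
  left_ne_zero_of_mul (h.mul_piecewise x y ▸ mul_ne_zero hx hy)

theorem factorizesAcross_excState_iff (E : Finset (Finset (Fin N))) (S : Finset (Fin N)) :
    FactorizesAcross (excState E) S ↔ ∀ e ∈ E, ∀ f ∈ E, e ∩ S ∪ f \ S ∈ E := by
  constructor
  · intro h e he f hf
    have hmix := h.piecewise_ne_zero (x := indicatorBits e) (y := indicatorBits f)
      (excState_ne_zero_iff.mpr (by simpa using he)) (excState_ne_zero_iff.mpr (by simpa using hf))
    simpa [bitSupport_piecewise] using excState_ne_zero_iff.mp hmix
  · intro hmix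
    refine ⟨fun x => (Real.sqrt E.card : ℂ)⁻¹ *
        if bitSupport x ∩ S ∈ E.image (· ∩ S) then 1 else 0,
      fun x => if bitSupport x \ S ∈ E.image (· \ S) then 1 else 0, ?_, ?_, ?_⟩
    · intro x y hxy
      simp only [bitSupport_inter_eq_of_eqOn hxy]
    · intro x y hxy
      simp only [bitSupport_sdiff_eq_of_eqOn hxy]
    · intro x
      simp only [excState_apply, mem_iff_of_mixing_closed hmix, mul_assoc, ite_zero_mul_ite_zero,
        one_mul]

end Qubits

theorem stmt6_general {N : ℕ} (E : Finset (Finset (Fin N))) (S : Finset (Fin N)) :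
    FactorizesAcross (excState E) S ↔
      ∃ E₁ E₂ : Finset (Finset (Fin N)),
        (∀ e ∈ E₁, e ⊆ S) ∧ (∀ e ∈ E₂, ∀ i ∈ e, i ∉ S) ∧
        E = (E₁ ×ˢ E₂).image (fun p => p.1 ∪ p.2) := by
  rw [factorizesAcross_excState_iff, exists_product_iff_mixing_closed]

/-- The excitation-state of a `k`-uniform hypergraph factorizes across the
bipartition `S | Sᶜ` of the vertices iff the hypergraph is a product
hypergraph with respect to this partition: there are edge sets `E₁` on `S` and
`E₂` on `Sᶜ` with `E = {e₁ ∪ e₂ : e₁ ∈ E₁, e₂ ∈ E₂}`. -/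
theorem stmt6 {N k : ℕ} (E : Finset (Finset (Fin N))) (hE : E.Nonempty)
    (hk : ∀ e ∈ E, e.card = k) (S : Finset (Fin N)) :
    FactorizesAcross (excState E) S ↔
      ∃ E₁ E₂ : Finset (Finset (Fin N)),
        (∀ e ∈ E₁, e ⊆ S) ∧ (∀ e ∈ E₂, ∀ i ∈ e, i ∉ S) ∧
        E = (E₁ ×ˢ E₂).image (fun p => p.1 ∪ p.2) :=
  stmt6_general E S
end

section
/- For the cyclic excitation-state |C_N⟩ (N ≥ 5), the two-party concurrence between vertices v and w equals 2/N if their distance in the cycle graph is 2, and equals 0 otherwise; for N = 4, the concurrence between opposite vertices equals 1. -/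
open scoped BigOperators

/-- The cycle graph on `ZMod N`: vertices `v` and `v+1` are adjacent. -/
def cycleGraph (N : ℕ) : SimpleGraph (ZMod N) :=
  SimpleGraph.fromRel (fun v w => w = v + 1)

noncomputable instance (N : ℕ) : DecidableRel (cycleGraph N).Adj :=
  Classical.decRel _

noncomputable instance (N : ℕ) [NeZero N] : DecidableEq (ZMod N) :=
  Classical.decEq _

/-- Joint neighborhood `n_{vw}`: number of common neighbors of `v` and `w`. -/
noncomputable def jointN {V : Type*} [Fintype V] (G : SimpleGraph V)
    [DecidableRel G.Adj] (v w : V) : ℕ :=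
  (Finset.univ.filter (fun u => G.Adj v u ∧ G.Adj u w)).card

/-- Section `s_{vw}`: for a graph, `1` if `v` and `w` are adjacent, else `0`. -/
noncomputable def secN {V : Type*} (G : SimpleGraph V) [DecidableRel G.Adj]
    (v w : V) : ℕ :=
  if G.Adj v w then 1 else 0

/-- Two-party concurrence of the excitation-state of a graph, via the formula
`C_{vw} = max {0, (2/|E|)(n_{vw} − √(s_{vw}(|E| − d_v − d_w + s_{vw})))}`. -/
noncomputable def conc {V : Type*} [Fintype V] [DecidableEq V] (G : SimpleGraph V)
    [DecidableRel G.Adj] (v w : V) : ℝ :=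
  max 0 ((2 / (G.edgeFinset.card : ℝ)) *
    ((jointN G v w : ℝ) - Real.sqrt ((secN G v w : ℝ) *
      ((G.edgeFinset.card : ℝ) - (G.degree v : ℝ) - (G.degree w : ℝ) + (secN G v w : ℝ)))))

/-! Here `|E| = N` and every vertex has degree `2`. For non-adjacent `v, w` we have `s_{vw} = 0`,
so the concurrence is `2 n_{vw} / N`; for adjacent ones `n_{vw} = 0` because the cycle has no
triangles (`N ≥ 4`), so it vanishes. When `N ≥ 5`, a common neighbour of distinct `v, w` is
forced to be `v ± 1` with `w = v ± 2`, so `n_{vw} ≤ 1`, with equality exactly at distance `2`.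
When `N = 4`, opposite vertices share both of their neighbours. -/

section GraphFormula

variable {V : Type*} (G : SimpleGraph V) {u v w : V}

lemma SimpleGraph.dist_eq_two_iff :
    G.dist u v = 2 ↔ u ≠ v ∧ ¬ G.Adj u v ∧ (G.commonNeighbors u v).Nonempty := by
  rw [← edist_eq_two_iff]
  constructor
  · intro h
    rw [← (SimpleGraph.Reachable.of_dist_ne_zero (by omega)).coe_dist_eq_edist, h]
    rfl
  · intro h
    have hr : G.Reachable u v := G.reachable_of_edist_ne_top (by rw [h]; simp)
    exact_mod_cast hr.coe_dist_eq_edist.trans h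

variable [Fintype V] [DecidableRel G.Adj]

lemma jointN_eq_ncard_commonNeighbors : jointN G v w = (G.commonNeighbors v w).ncard := by
  classical
  rw [jointN, Set.ncard_eq_toFinset_card']
  congr 1
  ext u
  simp [SimpleGraph.mem_commonNeighbors, G.adj_comm u w]

lemma one_le_jointN_of_dist_eq_two (h : G.dist v w = 2) : 1 ≤ jointN G v w := by
  rw [jointN_eq_ncard_commonNeighbors, Nat.one_le_iff_ne_zero, ← Nat.pos_iff_ne_zero,
    Set.ncard_pos]
  exact ((G.dist_eq_two_iff).1 h).2.2

lemma jointN_eq_zero_of_dist_ne_two (hG : G.CliqueFree 3) (hvw : v ≠ w) (h : G.dist v w ≠ 2) :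
    jointN G v w = 0 := by
  classical
  rw [jointN_eq_ncard_commonNeighbors, Set.ncard_eq_zero, Set.eq_empty_iff_forall_notMem]
  intro u hu
  rw [G.mem_commonNeighbors] at hu
  by_cases hadj : G.Adj v w
  · exact hG {v, w, u} (SimpleGraph.is3Clique_triple_iff.2 ⟨hadj, hu.1, hu.2⟩)
  · exact h ((G.dist_eq_two_iff).2 ⟨hvw, hadj, u, (G.mem_commonNeighbors).2 hu⟩)

variable [DecidableEq V]

lemma conc_of_not_adj (h : ¬ G.Adj v w) :
    conc G v w = 2 / (G.edgeFinset.card : ℝ) * jointN G v w := by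
  rw [conc, secN, if_neg h, Nat.cast_zero, zero_mul, Real.sqrt_zero, sub_zero]
  exact max_eq_right (by positivity)

lemma conc_eq_zero_of_jointN_eq_zero (h : jointN G v w = 0) : conc G v w = 0 := by
  rw [conc, h, Nat.cast_zero, zero_sub, mul_neg]
  exact max_eq_left (neg_nonpos.2 (by positivity))

end GraphFormula

lemma ZMod.natCast_ne_zero_of_pos_of_lt {k N : ℕ} (hk : 0 < k) (hkN : k < N) :
    (k : ZMod N) ≠ 0 :=
  (ZMod.natCast_eq_zero_iff k N).not.2 (Nat.not_dvd_of_pos_of_lt hk hkN)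

section CycleGraph

variable {N : ℕ} {u v w : ZMod N}

lemma cycleGraph_adj_iff (hN : N ≠ 1) : (cycleGraph N).Adj v w ↔ w = v + 1 ∨ w = v - 1 := by
  have h1 : (1 : ZMod N) ≠ 0 := by
    rwa [ne_eq, ZMod.one_eq_zero_iff]
  simp only [cycleGraph, SimpleGraph.fromRel_adj, ne_eq]
  constructor
  · rintro ⟨-, h | h⟩
    · exact Or.inl h
    · exact Or.inr (by rw [h]; ring)
  · rintro (rfl | rfl)
    · exact ⟨fun h => h1 (by linear_combination -h), Or.inl rfl⟩
    · exact ⟨fun h => h1 (by linear_combination h), Or.inr (by ring)⟩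

lemma neighborFinset_cycleGraph [NeZero N] (hN : N ≠ 1) (v : ZMod N) :
    (cycleGraph N).neighborFinset v = {v + 1, v - 1} := by
  ext u
  simp [cycleGraph_adj_iff hN]

lemma degree_cycleGraph [NeZero N] (hN : 3 ≤ N) (v : ZMod N) : (cycleGraph N).degree v = 2 := by
  have h2 : (2 : ZMod N) ≠ 0 := by
    exact_mod_cast ZMod.natCast_ne_zero_of_pos_of_lt (k := 2) (by norm_num) (by omega)
  rw [← SimpleGraph.card_neighborFinset_eq_degree, neighborFinset_cycleGraph (by omega),
    Finset.card_pair]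
  exact fun h => h2 (by linear_combination h)

lemma card_edgeFinset_cycleGraph [NeZero N] (hN : 3 ≤ N) :
    (cycleGraph N).edgeFinset.card = N := by
  have h := (cycleGraph N).sum_degrees_eq_twice_card_edges
  simp only [degree_cycleGraph hN, Finset.sum_const, Finset.card_univ, ZMod.card,
    smul_eq_mul] at h
  omega

lemma cycleGraph_adj_adj_cases (hN : N ≠ 1) (hvw : v ≠ w) (hvu : (cycleGraph N).Adj v u)
    (huw : (cycleGraph N).Adj u w) : u = v + 1 ∧ w = v + 2 ∨ u = v - 1 ∧ w = v - 2 := by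
  rw [cycleGraph_adj_iff hN] at hvu huw
  rcases hvu with rfl | rfl <;> rcases huw with rfl | rfl
  · exact Or.inl ⟨rfl, by ring⟩
  · exact absurd (by ring) hvw
  · exact absurd (by ring) hvw
  · exact Or.inr ⟨rfl, by ring⟩

lemma cycleGraph_cliqueFree_three (hN : 4 ≤ N) : (cycleGraph N).CliqueFree 3 := by
  have h1 : (1 : ZMod N) ≠ 0 := by
    exact_mod_cast ZMod.natCast_ne_zero_of_pos_of_lt (k := 1) (by norm_num) (by omega)
  have h3 : (3 : ZMod N) ≠ 0 := by
    exact_mod_cast ZMod.natCast_ne_zero_of_pos_of_lt (k := 3) (by norm_num) (by omega)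
  intro s hs
  obtain ⟨v, u, w, hvu, hvw, huw, rfl⟩ := SimpleGraph.is3Clique_iff.1 hs
  rcases cycleGraph_adj_adj_cases (by omega) hvw.ne hvu huw with ⟨-, rfl⟩ | ⟨-, rfl⟩ <;>
    rcases (cycleGraph_adj_iff (by omega)).1 hvw with h | h
  · exact h1 (by linear_combination h)
  · exact h3 (by linear_combination h)
  · exact h3 (by linear_combination -h)
  · exact h1 (by linear_combination -h)

lemma jointN_cycleGraph_le_one [NeZero N] (hN : 5 ≤ N) (hvw : v ≠ w) :
    jointN (cycleGraph N) v w ≤ 1 := by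
  have h4 : (4 : ZMod N) ≠ 0 := by
    exact_mod_cast ZMod.natCast_ne_zero_of_pos_of_lt (k := 4) (by norm_num) (by omega)
  rw [jointN_eq_ncard_commonNeighbors, Set.ncard_le_one]
  intro a ha b hb
  rw [SimpleGraph.mem_commonNeighbors, SimpleGraph.adj_comm _ w] at ha hb
  rcases cycleGraph_adj_adj_cases (by omega) hvw ha.1 ha.2 with ⟨rfl, h⟩ | ⟨rfl, h⟩ <;>
    rcases cycleGraph_adj_adj_cases (by omega) hvw hb.1 hb.2 with ⟨rfl, h'⟩ | ⟨rfl, h'⟩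
  · rfl
  · exact absurd (by linear_combination h' - h) h4
  · exact absurd (by linear_combination h - h') h4
  · rfl

lemma cycleGraph_not_adj_add_two (hN : 4 ≤ N) : ¬ (cycleGraph N).Adj v (v + 2) := by
  have hadj : ∀ x : ZMod N, (cycleGraph N).Adj x (x + 1) := fun x =>
    (cycleGraph_adj_iff (by omega)).2 (Or.inl rfl)
  refine fun h => cycleGraph_cliqueFree_three hN {v, v + 1, v + 2}
    (SimpleGraph.is3Clique_triple_iff.2 ⟨hadj v, h, ?_⟩)
  simpa only [add_assoc, one_add_one_eq_two] using hadj (v + 1)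

lemma jointN_cycleGraph_four_add_two (v : ZMod 4) : jointN (cycleGraph 4) v (v + 2) = 2 := by
  have h4 : (4 : ZMod 4) = 0 := rfl
  have h : (cycleGraph 4).neighborSet (v + 2) = (cycleGraph 4).neighborSet v := by
    ext u
    simp only [SimpleGraph.mem_neighborSet, cycleGraph_adj_iff (by norm_num : 4 ≠ 1)]
    rw [show v + 2 + 1 = v - 1 by linear_combination h4, show v + 2 - 1 = v + 1 by ring, or_comm]
  rw [jointN_eq_ncard_commonNeighbors, SimpleGraph.commonNeighbors_eq, h, Set.inter_self,
    Set.ncard_eq_toFinset_card', ← SimpleGraph.neighborFinset_def,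
    SimpleGraph.card_neighborFinset_eq_degree, degree_cycleGraph (by norm_num)]

end CycleGraph

/-- For the cyclic excitation-state `|C_N⟩` with `N ≥ 5`, the two-party
concurrence between distinct vertices equals `2/N` if their distance in the
cycle is `2`, and `0` otherwise; for `N = 4`, the concurrence between opposite
vertices equals `1`. -/
theorem stmt13 (N : ℕ) [NeZero N] :
    (5 ≤ N → ∀ v w : ZMod N, v ≠ w →
      conc (cycleGraph N) v w =
        if (cycleGraph N).dist v w = 2 then 2 / (N : ℝ) else 0) ∧
    (N = 4 → ∀ v : ZMod N, conc (cycleGraph N) v (v + 2) = 1) := by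
  constructor
  · intro hN v w hvw
    split_ifs with hd
    · have hnadj : ¬ (cycleGraph N).Adj v w := by
        rw [← SimpleGraph.dist_eq_one_iff_adj, hd]
        decide
      have hj : jointN (cycleGraph N) v w = 1 :=
        le_antisymm (jointN_cycleGraph_le_one hN hvw) (one_le_jointN_of_dist_eq_two _ hd)
      rw [conc_of_not_adj _ hnadj, hj, card_edgeFinset_cycleGraph (by omega), Nat.cast_one,
        mul_one]
    · exact conc_eq_zero_of_jointN_eq_zero _
        (jointN_eq_zero_of_dist_ne_two _ (cycleGraph_cliqueFree_three (by omega)) hvw hd)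
  · rintro rfl v
    rw [conc_of_not_adj _ (cycleGraph_not_adj_add_two le_rfl), jointN_cycleGraph_four_add_two,
      card_edgeFinset_cycleGraph (by norm_num)]
    norm_num
end
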